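/- arXiv:patt-sol/9906009 — 2 statements merged into one kernel-verified Lean document; each statement's English description precedes it below -/
import Mathlib

section
/- For every real number a > 1, (1/(2π)) · ∫₀^{2π} cos⁴ θ/(a − cos θ)⁷ dθ = ( 3·(2a)⁶ + 202·(2a)⁴ + 928·(2a)² + 256 ) / ( 512·(a² − 1)^{13/2} ). -/
open Real

noncomputable def Pa (a x : ℝ) : ℝ :=
  ((-8) * a ^ 4 + 402 * a ^ 6 + 2265 * a ^ 8 + 806 * a ^ 10)
  + (48 * a ^ 3 + (-2292) * a ^ 5 + (-11850) * a ^ 7 + (-3321) * a ^ 9 + 90 * a ^ 11) * x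
  + ((-120) * a ^ 2 + 5366 * a ^ 4 + 24606 * a ^ 6 + 4890 * a ^ 8 + (-92) * a ^ 10) * x ^ 2
  + (160 * a + (-6536) * a ^ 3 + (-24966) * a ^ 5 + (-3070) * a ^ 7 + (-298) * a ^ 9 + 60 * a ^ 11) * x ^ 3
  + ((-120) + 4260 * a ^ 2 + 11757 * a ^ 4 + 1332 * a ^ 6 + 120 * a ^ 8 + (-24) * a ^ 10) * x ^ 4
  + ((-1000) * a + (-2212) * a ^ 3 + (-237) * a ^ 5 + (-20) * a ^ 7 + 4 * a ^ 9) * x ^ 5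

noncomputable def Pa' (a x : ℝ) : ℝ :=
  (48 * a ^ 3 + (-2292) * a ^ 5 + (-11850) * a ^ 7 + (-3321) * a ^ 9 + 90 * a ^ 11)
  + 2 * ((-120) * a ^ 2 + 5366 * a ^ 4 + 24606 * a ^ 6 + 4890 * a ^ 8 + (-92) * a ^ 10) * x
  + 3 * (160 * a + (-6536) * a ^ 3 + (-24966) * a ^ 5 + (-3070) * a ^ 7 + (-298) * a ^ 9 + 60 * a ^ 11) * x ^ 2
  + 4 * ((-120) + 4260 * a ^ 2 + 11757 * a ^ 4 + 1332 * a ^ 6 + 120 * a ^ 8 + (-24) * a ^ 10) * x ^ 3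
  + 5 * ((-1000) * a + (-2212) * a ^ 3 + (-237) * a ^ 5 + (-20) * a ^ 7 + 4 * a ^ 9) * x ^ 4

lemma hasDerivAt_Pa (a x : ℝ) : HasDerivAt (fun x => Pa a x) (Pa' a x) x := by
  unfold Pa Pa'
  have h := (((((hasDerivAt_const x ((-8) * a ^ 4 + 402 * a ^ 6 + 2265 * a ^ 8 + 806 * a ^ 10)).add
      ((hasDerivAt_id x).const_mul (48 * a ^ 3 + (-2292) * a ^ 5 + (-11850) * a ^ 7 + (-3321) * a ^ 9 + 90 * a ^ 11))).add
      ((hasDerivAt_pow 2 x).const_mul ((-120) * a ^ 2 + 5366 * a ^ 4 + 24606 * a ^ 6 + 4890 * a ^ 8 + (-92) * a ^ 10))).add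
      ((hasDerivAt_pow 3 x).const_mul (160 * a + (-6536) * a ^ 3 + (-24966) * a ^ 5 + (-3070) * a ^ 7 + (-298) * a ^ 9 + 60 * a ^ 11))).add
      ((hasDerivAt_pow 4 x).const_mul ((-120) + 4260 * a ^ 2 + 11757 * a ^ 4 + 1332 * a ^ 6 + 120 * a ^ 8 + (-24) * a ^ 10))).add
      ((hasDerivAt_pow 5 x).const_mul ((-1000) * a + (-2212) * a ^ 3 + (-237) * a ^ 5 + (-20) * a ^ 7 + 4 * a ^ 9))
  refine h.congr_deriv ?_
  push_cast; ring

lemma arcval (a b s c : ℝ) (hb2 : b ^ 2 = a ^ 2 - 1) (hs2 : s ^ 2 = 1 - c ^ 2)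
    (hac : 0 < a - c) (hkc : 0 < a + b - c) :
    1 + 2 * (1 / (1 + (s / (a + b - c)) ^ 2) * ((c * (a + b - c) - s * (0 - -s)) / (a + b - c) ^ 2))
      = b / (a - c) := by
  have h1 : (1 + (s / (a + b - c)) ^ 2) ≠ 0 := by positivity
  field_simp
  linear_combination (c - a - b) * hs2 + (c - a - b) * hb2

noncomputable def antider (a b θ : ℝ) : ℝ :=
  Real.sin θ * Pa a (Real.cos θ) / (240 * (a ^ 2 - 1) ^ 6 * (a - Real.cos θ) ^ 6)
  + (6 * a ^ 6 + 101 * a ^ 4 + 116 * a ^ 2 + 8) / (16 * (a ^ 2 - 1) ^ 6 * b)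
    * (θ + 2 * Real.arctan (Real.sin θ / (a + b - Real.cos θ)))

set_option maxHeartbeats 2000000 in
lemma hasDerivAt_antider (a b : ℝ) (ha : 1 < a) (hb2 : b ^ 2 = a ^ 2 - 1) (hbpos : 0 < b)
    (θ : ℝ) : HasDerivAt (antider a b) (Real.cos θ ^ 4 / (a - Real.cos θ) ^ 7) θ := by
  have hcos : ∀ t : ℝ, 0 < a - Real.cos t := fun t => by have := Real.cos_le_one t; linarith
  have hkc : 0 < a + b - Real.cos θ := by have := Real.cos_le_one θ; linarith
  have ha2 : (0:ℝ) < a ^ 2 - 1 := by nlinarith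
  have hc := Real.hasDerivAt_cos θ
  have hsin := Real.hasDerivAt_sin θ
  have hPc : HasDerivAt (fun t => Pa a (Real.cos t)) (Pa' a (Real.cos θ) * -Real.sin θ) θ :=
    (hasDerivAt_Pa a (Real.cos θ)).comp θ hc
  have hN := hsin.mul hPc
  have hd0 : HasDerivAt (fun t => a - Real.cos t) (0 - -Real.sin θ) θ :=
    (hasDerivAt_const θ a).sub hc
  have hd := (hd0.pow 6).const_mul (240 * (a ^ 2 - 1) ^ 6)
  have hden_ne : (240 * (a ^ 2 - 1) ^ 6 * (a - Real.cos θ) ^ 6) ≠ 0 := by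
    have := mul_ne_zero (pow_ne_zero 6 ha2.ne') (pow_ne_zero 6 (hcos θ).ne')
    rw [mul_assoc]; exact mul_ne_zero (by norm_num) this
  have hH1 := hN.div hd hden_ne
  have hg0 : HasDerivAt (fun t => a + b - Real.cos t) (0 - -Real.sin θ) θ :=
    (hasDerivAt_const θ (a + b)).sub hc
  have hg := hsin.div hg0 hkc.ne'
  have harc := hg.arctan
  have hsum := ((hasDerivAt_id θ).add (harc.const_mul 2)).const_mul
    ((6 * a ^ 6 + 101 * a ^ 4 + 116 * a ^ 2 + 8) / (16 * (a ^ 2 - 1) ^ 6 * b))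
  have htot := hH1.add hsum
  have goal : HasDerivAt (antider a b) _ θ := htot
  convert goal using 1
  simp only [Pi.div_apply, Pi.mul_apply, Pi.pow_apply]
  have hs2 : Real.sin θ ^ 2 = 1 - Real.cos θ ^ 2 := by
    have := Real.sin_sq_add_cos_sq θ; linarith
  set s := Real.sin θ with hsdef
  set c := Real.cos θ with hcdef
  rw [arcval a b s c hb2 hs2 (hcos θ) hkc]
  have hac := hcos θ
  have hQb : (6 * a ^ 6 + 101 * a ^ 4 + 116 * a ^ 2 + 8) / (16 * (a ^ 2 - 1) ^ 6 * b)
      * (b / (a - c))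
      = (6 * a ^ 6 + 101 * a ^ 4 + 116 * a ^ 2 + 8) / (16 * (a ^ 2 - 1) ^ 6 * (a - c)) := by
    rw [div_mul_div_comm]
    rw [div_eq_div_iff (by positivity) (by positivity)]
    ring
  rw [hQb]
  have e2 : ((c * Pa a c + s * (Pa' a c * -s)) * (240 * (a ^ 2 - 1) ^ 6 * (a - c) ^ 6) -
        s * Pa a c * (240 * (a ^ 2 - 1) ^ 6 * ((6:ℕ) * (a - c) ^ (6 - 1) * (0 - -s)))) /
      (240 * (a ^ 2 - 1) ^ 6 * (a - c) ^ 6) ^ 2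
      = ((c * Pa a c - s ^ 2 * Pa' a c) * (a - c) - 6 * s ^ 2 * Pa a c)
          / (240 * (a ^ 2 - 1) ^ 6 * (a - c) ^ 7) := by
    rw [div_eq_div_iff (by positivity) (by positivity)]
    push_cast
    ring
  rw [e2]
  have e3 : ((c * Pa a c - s ^ 2 * Pa' a c) * (a - c) - 6 * s ^ 2 * Pa a c)
      = c ^ 4 * (240 * (a ^ 2 - 1) ^ 6)
        - 15 * (6 * a ^ 6 + 101 * a ^ 4 + 116 * a ^ 2 + 8) * (a - c) ^ 6 := by
    simp only [Pa, Pa']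
    linear_combination (240 * c ^ 4 + 1000 * a * c ^ 5 + (-3520) * a ^ 2 * c ^ 4 + 2568 * a ^ 3 * c ^ 3 + 2212 * a ^ 3 * c ^ 5 + (-1856) * a ^ 4 * c ^ 2 + (-12454) * a ^ 4 * c ^ 4 + 728 * a ^ 5 * c + 27870 * a ^ 5 * c ^ 3 + 237 * a ^ 5 * c ^ 5 + (-120) * a ^ 6 + (-23526) * a ^ 6 * c ^ 2 + (-1479) * a ^ 6 * c ^ 4 + 10038 * a ^ 7 * c + 3882 * a ^ 7 * c ^ 3 + 20 * a ^ 7 * c ^ 5 + (-1740) * a ^ 8 + (-10350) * a ^ 8 * c ^ 2 + (-140) * a ^ 8 * c ^ 4 + 6825 * a ^ 9 * c + 414 * a ^ 9 * c ^ 3 + (-4) * a ^ 9 * c ^ 5 + (-1515) * a ^ 10 + 1262 * a ^ 10 * c ^ 2 + 28 * a ^ 10 * c ^ 4 + (-266) * a ^ 11 * c + (-84) * a ^ 11 * c ^ 3 + (-90) * a ^ 12 + (-180) * a ^ 12 * c ^ 2) * hs2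
  rw [e3]
  rw [div_add_div _ _ (by positivity) (by positivity), div_eq_div_iff (by positivity) (by positivity)]
  ring

/-- Residue evaluation of the average `A₄` of `cos⁴ θ/(a − cos θ)⁷`. -/
theorem stmt_11 (a : ℝ) (ha : 1 < a) :
    (1 / (2 * π)) * ∫ θ in (0:ℝ)..(2 * π), Real.cos θ ^ 4 / (a - Real.cos θ) ^ 7
      = (3 * (2 * a) ^ 6 + 202 * (2 * a) ^ 4 + 928 * (2 * a) ^ 2 + 256)
        / (512 * (a ^ 2 - 1) ^ ((13 : ℝ) / 2)) := by
  have ha2 : (0:ℝ) < a ^ 2 - 1 := by nlinarith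
  set b := Real.sqrt (a ^ 2 - 1) with hbdef
  have hb2 : b ^ 2 = a ^ 2 - 1 := Real.sq_sqrt ha2.le
  have hbpos : 0 < b := Real.sqrt_pos.mpr ha2
  have hcos : ∀ θ : ℝ, 0 < a - Real.cos θ := fun θ => by
    have := Real.cos_le_one θ; linarith
  have hint : ∫ θ in (0:ℝ)..(2 * π), Real.cos θ ^ 4 / (a - Real.cos θ) ^ 7
      = antider a b (2 * π) - antider a b 0 := by
    apply intervalIntegral.integral_eq_sub_of_hasDerivAt
    · exact fun θ _ => hasDerivAt_antider a b ha hb2 hbpos θ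
    · apply ContinuousOn.intervalIntegrable
      apply ContinuousOn.div
      · fun_prop
      · fun_prop
      · exact fun θ _ => pow_ne_zero _ (hcos θ).ne'
  have hA0 : antider a b 0 = 0 := by
    simp [antider]
  have hA2 : antider a b (2 * π)
      = (6 * a ^ 6 + 101 * a ^ 4 + 116 * a ^ 2 + 8) / (16 * (a ^ 2 - 1) ^ 6 * b) * (2 * π) := by
    simp [antider, Real.sin_two_pi, Real.cos_two_pi]
  have hrpow : (a ^ 2 - 1 : ℝ) ^ ((13 : ℝ) / 2) = (a ^ 2 - 1) ^ (6 : ℕ) * b := by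
    rw [hbdef, Real.sqrt_eq_rpow, show ((13:ℝ)/2) = (6:ℕ) + 1/2 by norm_num,
      Real.rpow_add ha2, Real.rpow_natCast]
  rw [hint, hA0, hA2, hrpow]
  have hπ : (π : ℝ) ≠ 0 := Real.pi_ne_zero
  field_simp
  ring
end

section
/- Let m₁, m₂ be real numbers with 0 < m₁ < m₂. Then for all real ζ₁, ζ₂ and θ, the quantity D(ζ₁, ζ₂, θ) := (m₁ + m₂)² · cosh ζ₁ · cosh ζ₂ − 2·m₁·m₂ · cosh(ζ₁ + ζ₂) − 2·m₁·m₂ · cos θ is strictly positive. -/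
/-- The denominator `D` of the two-soliton breather solution is strictly positive. -/
theorem stmt_13 (m₁ m₂ : ℝ) (h0 : 0 < m₁) (h12 : m₁ < m₂) (ζ₁ ζ₂ θ : ℝ) :
    0 < (m₁ + m₂) ^ 2 * Real.cosh ζ₁ * Real.cosh ζ₂
        - 2 * m₁ * m₂ * Real.cosh (ζ₁ + ζ₂) - 2 * m₁ * m₂ * Real.cos θ := by
  have h1 := Real.one_le_cosh ζ₁
  have h2 := Real.one_le_cosh ζ₂
  have h3 := Real.one_le_cosh (ζ₁ - ζ₂)
  have h4 := Real.cos_le_one θ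
  have hadd := Real.cosh_add ζ₁ ζ₂
  have hsub := Real.cosh_sub ζ₁ ζ₂
  have hc : 1 ≤ Real.cosh ζ₁ * Real.cosh ζ₂ := by nlinarith
  have hle : Real.cosh (ζ₁ + ζ₂) ≤ 2 * (Real.cosh ζ₁ * Real.cosh ζ₂) - 1 := by
    nlinarith
  have hm : 0 < m₁ * m₂ := mul_pos h0 (h0.trans h12)
  have hsq : (0:ℝ) < (m₁ - m₂) ^ 2 := by nlinarith [sq_nonneg (m₁ - m₂)]
  nlinarith [mul_le_mul_of_nonneg_left hle (le_of_lt (by linarith : (0:ℝ) < 2 * m₁ * m₂)),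
    mul_le_mul_of_nonneg_left hc (le_of_lt hsq)]
end
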